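/- arXiv:1903.09998 — 2 statements merged into one kernel-verified Lean document; each statement's English description precedes it below -/
import Mathlib

section
/- Let V = V_0 + V_1 with V_1 bounded, μ ∝ e^{-V}, μ_0 ∝ e^{-V_0}, and consider a Metropolis–Hastings chain with ε-independent proposal density q and acceptance function F equal to the Metropolis or Barker rule. Then for every measurable f, the stationary one-step expected squared jump E_μ[|f(X_{k+1}) − f(X_k)|²] satisfies e^{-2 osc V_1} D_0(f) ≤ E_μ[|f(X_{k+1}) − f(X_k)|²] ≤ e^{2 osc V_1} D_0(f), where D_0(f) = E_{μ_0}[|f(X_{k+1}) − f(X_k)|²] is the corresponding quantity for the chain targeting μ_0 with the same proposal. -/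
/-!
Write `U` and `V` for two potentials with `m ≤ V - U ≤ M`. Then the log-MH ratios `R_V` and `R_U`
differ by at most `M - m`, so the acceptance probabilities differ by a factor at most `e^(M-m)`,
while `e^(-V) ≤ e^(-m) e^(-U)` and `∫ e^(-V) ≥ e^(-M) ∫ e^(-U)`. Together these give
`D_V(f) ≤ e^(2(M-m)) D_U(f)`. Applied to `(V0, V0 + V1)` and to `(V0 + V1, V0)` this gives both
inequalities, with `M - m = osc V1` in either case.
-/

open MeasureTheory Real

/-- Stationary one-step expected squared jump of a Metropolis–Hastings chain with
proposal density `q`, acceptance function `F`, log-MH-ratio `R`, and target density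
`ρ` (normalized by `Z`). -/
noncomputable def oneStepSqJump {n : ℕ} (f : (Fin n → ℝ) → ℝ)
    (q : (Fin n → ℝ) → (Fin n → ℝ) → ℝ) (F : ℝ → ℝ)
    (R : (Fin n → ℝ) → (Fin n → ℝ) → ℝ) (ρ : (Fin n → ℝ) → ℝ) : ℝ :=
  (∫ p : (Fin n → ℝ) × (Fin n → ℝ),
      (f p.2 - f p.1) ^ 2 * F (R p.1 p.2) * q p.1 p.2 * ρ p.1) / ∫ x, ρ x

lemma min_one_exp_le_exp_mul {a b c : ℝ} (h : |b - a| ≤ c) :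
    min 1 (exp b) ≤ exp c * min 1 (exp a) := by
  rw [mul_min_of_nonneg _ _ (exp_pos c).le, mul_one, ← exp_add]
  exact min_le_min (one_le_exp ((abs_nonneg _).trans h))
    (exp_le_exp.mpr (by linarith [le_abs_self (b - a)]))

lemma inv_one_add_exp_neg_le_exp_mul {a b c : ℝ} (h : |b - a| ≤ c) :
    (1 + exp (-b))⁻¹ ≤ exp c * (1 + exp (-a))⁻¹ := by
  have hc : exp (-c) ≤ 1 := exp_le_one_iff.mpr (by linarith [abs_nonneg (b - a)])
  have hab : exp (-c) * exp (-a) ≤ exp (-b) := by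
    rw [← exp_add]; exact exp_le_exp.mpr (by linarith [le_abs_self (b - a)])
  calc (1 + exp (-b))⁻¹ ≤ (exp (-c) * (1 + exp (-a)))⁻¹ :=
        inv_anti₀ (by positivity) (by linarith)
    _ = exp c * (1 + exp (-a))⁻¹ := by rw [mul_inv, ← exp_neg, neg_neg]

lemma acceptance_le_exp_mul {F : ℝ → ℝ}
    (hF : (∀ r, F r = min 1 (exp r)) ∨ (∀ r, F r = (1 + exp (-r))⁻¹)) {a b c : ℝ}
    (h : |b - a| ≤ c) : F b ≤ exp c * F a := by
  rcases hF with hF | hF <;> simp only [hF]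
  exacts [min_one_exp_le_exp_mul h, inv_one_add_exp_neg_le_exp_mul h]

lemma acceptance_nonneg {F : ℝ → ℝ}
    (hF : (∀ r, F r = min 1 (exp r)) ∨ (∀ r, F r = (1 + exp (-r))⁻¹)) (r : ℝ) : 0 ≤ F r := by
  rcases hF with hF | hF <;> rw [hF r] <;> positivity

lemma MeasureTheory.Integrable.exp_neg_add_of_bddBelow {α : Type*} [MeasurableSpace α]
    {μ : Measure α} {V0 V1 : α → ℝ} (hint : Integrable (fun x => exp (-V0 x)) μ)
    (hV1 : AEMeasurable V1 μ) (hbb : BddBelow (Set.range V1)) :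
    Integrable (fun x => exp (-(V0 x + V1 x))) μ := by
  refine (hint.mul_of_top_left (memLp_top_of_bound hV1.neg.exp.aestronglyMeasurable
    (exp (-⨅ x, V1 x)) (.of_forall fun x => ?_))).congr (.of_forall fun x => ?_)
  · rw [norm_of_nonneg (exp_pos _).le]
    exact exp_le_exp.mpr (neg_le_neg (ciInf_le hbb x))
  · simp only [Pi.mul_apply, Pi.neg_apply, ← exp_add, neg_add]

section Perturbation

variable {n : ℕ} (f : (Fin n → ℝ) → ℝ) (q : (Fin n → ℝ) → (Fin n → ℝ) → ℝ) (F : ℝ → ℝ)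

noncomputable def sqJumpIntegrand (W : (Fin n → ℝ) → ℝ) (p : (Fin n → ℝ) × (Fin n → ℝ)) : ℝ :=
  (f p.2 - f p.1) ^ 2 * F (W p.1 - W p.2 + log (q p.2 p.1 / q p.1 p.2)) * q p.1 p.2 * exp (-W p.1)

lemma oneStepSqJump_eq_integral_sqJumpIntegrand_div (W : (Fin n → ℝ) → ℝ) :
    oneStepSqJump f q F (fun x y => W x - W y + log (q y x / q x y)) (fun x => exp (-W x)) =
      (∫ p, sqJumpIntegrand f q F W p) / ∫ x, exp (-W x) :=
  rfl

lemma sqJumpIntegrand_nonneg (hq : ∀ x y, 0 ≤ q x y) (hF0 : ∀ r, 0 ≤ F r)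
    (W : (Fin n → ℝ) → ℝ) (p : (Fin n → ℝ) × (Fin n → ℝ)) : 0 ≤ sqJumpIntegrand f q F W p := by
  have := hF0 (W p.1 - W p.2 + log (q p.2 p.1 / q p.1 p.2))
  have := hq p.1 p.2
  unfold sqJumpIntegrand
  positivity

lemma sqJumpIntegrand_le (U V : (Fin n → ℝ) → ℝ) {m M : ℝ}
    (hq : ∀ x y, 0 ≤ q x y) (hF0 : ∀ r, 0 ≤ F r)
    (hF : ∀ a b c, |b - a| ≤ c → F b ≤ exp c * F a)
    (hm : ∀ x, m ≤ V x - U x) (hM : ∀ x, V x - U x ≤ M) (p : (Fin n → ℝ) × (Fin n → ℝ)) :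
    sqJumpIntegrand f q F V p ≤ exp (M - m) * exp (-m) * sqJumpIntegrand f q F U p := by
  obtain ⟨x, y⟩ := p
  set L := log (q y x / q x y)
  have hR : |(V x - V y + L) - (U x - U y + L)| ≤ M - m := by
    rw [abs_le]
    constructor <;> linarith [hm x, hm y, hM x, hM y]
  have hρ : exp (-V x) ≤ exp (-m) * exp (-U x) := by
    rw [← exp_add]; exact exp_le_exp.mpr (by linarith [hm x])
  calc sqJumpIntegrand f q F V (x, y)
      = ((f y - f x) ^ 2 * q x y) * (F (V x - V y + L) * exp (-V x)) := by
        simp only [sqJumpIntegrand, L]; ring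
    _ ≤ ((f y - f x) ^ 2 * q x y) *
          ((exp (M - m) * F (U x - U y + L)) * (exp (-m) * exp (-U x))) := by
        gcongr
        · exact mul_nonneg (sq_nonneg _) (hq x y)
        · exact mul_nonneg (exp_pos _).le (hF0 _)
        · exact hF _ _ _ hR
    _ = exp (M - m) * exp (-m) * sqJumpIntegrand f q F U (x, y) := by
        simp only [sqJumpIntegrand, L]; ring

lemma oneStepSqJump_le_exp_mul_oneStepSqJump (U V : (Fin n → ℝ) → ℝ) {m M : ℝ}
    (hq : ∀ x y, 0 ≤ q x y) (hF0 : ∀ r, 0 ≤ F r)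
    (hF : ∀ a b c, |b - a| ≤ c → F b ≤ exp c * F a)
    (hm : ∀ x, m ≤ V x - U x) (hM : ∀ x, V x - U x ≤ M)
    (hZU : Integrable (fun x => exp (-U x))) (hZV : Integrable (fun x => exp (-V x)))
    (hNU : Integrable (sqJumpIntegrand f q F U)) :
    oneStepSqJump f q F (fun x y => V x - V y + log (q y x / q x y)) (fun x => exp (-V x)) ≤
      exp (2 * (M - m)) *
        oneStepSqJump f q F (fun x y => U x - U y + log (q y x / q x y)) (fun x => exp (-U x)) := by
  have hN : ∫ p, sqJumpIntegrand f q F V p ≤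
      exp (M - m) * exp (-m) * ∫ p, sqJumpIntegrand f q F U p := by
    rw [← integral_const_mul]
    exact integral_mono_of_nonneg (.of_forall (sqJumpIntegrand_nonneg f q F hq hF0 V))
      (hNU.const_mul _) (.of_forall (sqJumpIntegrand_le f q F U V hq hF0 hF hm hM))
  have hZ : exp (-M) * ∫ x, exp (-U x) ≤ ∫ x, exp (-V x) := by
    rw [← integral_const_mul]
    refine integral_mono (hZU.const_mul _) hZV fun x => ?_
    rw [← exp_add]; exact exp_le_exp.mpr (by linarith [hM x])
  have hconst : exp (M - m) * exp (-m) / exp (-M) = exp (2 * (M - m)) := by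
    rw [← exp_add, ← exp_sub]; ring_nf
  rw [oneStepSqJump_eq_integral_sqJumpIntegrand_div, oneStepSqJump_eq_integral_sqJumpIntegrand_div]
  calc _ ≤ (exp (M - m) * exp (-m) * ∫ p, sqJumpIntegrand f q F U p) /
        (exp (-M) * ∫ x, exp (-U x)) :=
        div_le_div₀ (mul_nonneg (by positivity)
          (integral_nonneg (sqJumpIntegrand_nonneg f q F hq hF0 U))) hN
          (mul_pos (exp_pos _) (integral_exp_pos hZU)) hZ
    _ = _ := by rw [mul_div_mul_comm, hconst]

end Perturbation

theorem stmt7_general {n : ℕ} (V0 V1 : (Fin n → ℝ) → ℝ) (f : (Fin n → ℝ) → ℝ)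
    (q : (Fin n → ℝ) → (Fin n → ℝ) → ℝ) (F : ℝ → ℝ)
    (hV1 : Measurable V1)
    (hq : ∀ x y, 0 < q x y)
    (hba : BddAbove (Set.range V1)) (hbb : BddBelow (Set.range V1))
    (hint : Integrable (fun x => Real.exp (-(V0 x))))
    (hF : (∀ r, F r = min 1 (Real.exp r)) ∨ (∀ r, F r = (1 + Real.exp (-r))⁻¹))
    (hI : Integrable (fun p : (Fin n → ℝ) × (Fin n → ℝ) =>
      (f p.2 - f p.1) ^ 2 *
        F ((V0 p.1 + V1 p.1) - (V0 p.2 + V1 p.2) + Real.log (q p.2 p.1 / q p.1 p.2)) *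
        q p.1 p.2 * Real.exp (-(V0 p.1 + V1 p.1))))
    (hI0 : Integrable (fun p : (Fin n → ℝ) × (Fin n → ℝ) =>
      (f p.2 - f p.1) ^ 2 *
        F (V0 p.1 - V0 p.2 + Real.log (q p.2 p.1 / q p.1 p.2)) *
        q p.1 p.2 * Real.exp (-(V0 p.1)))) :
    Real.exp (-(2 * ((⨆ x, V1 x) - ⨅ x, V1 x))) *
        oneStepSqJump f q F
          (fun x y => V0 x - V0 y + Real.log (q y x / q x y))
          (fun x => Real.exp (-(V0 x)))
      ≤ oneStepSqJump f q F
          (fun x y => (V0 x + V1 x) - (V0 y + V1 y) + Real.log (q y x / q x y))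
          (fun x => Real.exp (-(V0 x + V1 x))) ∧
    oneStepSqJump f q F
        (fun x y => (V0 x + V1 x) - (V0 y + V1 y) + Real.log (q y x / q x y))
        (fun x => Real.exp (-(V0 x + V1 x)))
      ≤ Real.exp (2 * ((⨆ x, V1 x) - ⨅ x, V1 x)) *
        oneStepSqJump f q F
          (fun x y => V0 x - V0 y + Real.log (q y x / q x y))
          (fun x => Real.exp (-(V0 x))) := by
  have hZ := hint.exp_neg_add_of_bddBelow hV1.aemeasurable hbb
  have hq0 : ∀ x y, 0 ≤ q x y := fun x y => (hq x y).le
  have hFexp : ∀ a b c, |b - a| ≤ c → F b ≤ exp c * F a := fun _ _ _ => acceptance_le_exp_mul hF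
  have hF0 := acceptance_nonneg hF
  have hupper := oneStepSqJump_le_exp_mul_oneStepSqJump f q F V0 (fun x => V0 x + V1 x)
    hq0 hF0 hFexp (fun x => by simpa using ciInf_le hbb x) (fun x => by simpa using le_ciSup hba x)
    hint hZ hI0
  have hlower := oneStepSqJump_le_exp_mul_oneStepSqJump f q F (fun x => V0 x + V1 x) V0
    (m := -⨆ x, V1 x) (M := -⨅ x, V1 x) hq0 hF0 hFexp
    (fun x => by linarith [le_ciSup hba x]) (fun x => by linarith [ciInf_le hbb x]) hZ hint hI
  rw [neg_sub_neg] at hlower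
  refine ⟨?_, hupper⟩
  rwa [exp_neg, inv_mul_le_iff₀ (exp_pos _)]

theorem stmt7 {n : ℕ} (V0 V1 : (Fin n → ℝ) → ℝ) (f : (Fin n → ℝ) → ℝ)
    (q : (Fin n → ℝ) → (Fin n → ℝ) → ℝ) (F : ℝ → ℝ)
    (hV0 : Measurable V0) (hV1 : Measurable V1) (hf : Measurable f)
    (hq : ∀ x y, 0 < q x y)
    (hba : BddAbove (Set.range V1)) (hbb : BddBelow (Set.range V1))
    (hint : Integrable (fun x => Real.exp (-(V0 x))))
    (hF : (∀ r, F r = min 1 (Real.exp r)) ∨ (∀ r, F r = (1 + Real.exp (-r))⁻¹))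
    (hI : Integrable (fun p : (Fin n → ℝ) × (Fin n → ℝ) =>
      (f p.2 - f p.1) ^ 2 *
        F ((V0 p.1 + V1 p.1) - (V0 p.2 + V1 p.2) + Real.log (q p.2 p.1 / q p.1 p.2)) *
        q p.1 p.2 * Real.exp (-(V0 p.1 + V1 p.1))))
    (hI0 : Integrable (fun p : (Fin n → ℝ) × (Fin n → ℝ) =>
      (f p.2 - f p.1) ^ 2 *
        F (V0 p.1 - V0 p.2 + Real.log (q p.2 p.1 / q p.1 p.2)) *
        q p.1 p.2 * Real.exp (-(V0 p.1)))) :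
    Real.exp (-(2 * ((⨆ x, V1 x) - ⨅ x, V1 x))) *
        oneStepSqJump f q F
          (fun x y => V0 x - V0 y + Real.log (q y x / q x y))
          (fun x => Real.exp (-(V0 x)))
      ≤ oneStepSqJump f q F
          (fun x y => (V0 x + V1 x) - (V0 y + V1 y) + Real.log (q y x / q x y))
          (fun x => Real.exp (-(V0 x + V1 x))) ∧
    oneStepSqJump f q F
        (fun x y => (V0 x + V1 x) - (V0 y + V1 y) + Real.log (q y x / q x y))
        (fun x => Real.exp (-(V0 x + V1 x)))
      ≤ Real.exp (2 * ((⨆ x, V1 x) - ⨅ x, V1 x)) *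
        oneStepSqJump f q F
          (fun x y => V0 x - V0 y + Real.log (q y x / q x y))
          (fun x => Real.exp (-(V0 x))) :=
  stmt7_general V0 V1 f q F hV1 hq hba hbb hint hF hI hI0
end

section
/- Suppose the potential satisfies V_0(x) ≥ V_min + C_p Σ_{i=1}^n |x_i|^p with p ≥ 1, C_p > 0, and V = V_0 + V_1 with V_1 bounded. Then the Boltzmann measure μ ∝ e^{-V} satisfies a concentration inequality: there exist constants C₀ and κ > 0, depending only on n, p, C_p, V_min and osc V_1 (but not on V_1 otherwise), such that P_μ(|X| ≥ t) ≤ C₀ e^{−κ t^p} for all t ≥ 0. -/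
/-! Comparing the `ℓ^p` and `ℓ²` norms gives `∑ |xᵢ|^p ≥ A⁻¹ ‖x‖^p`, so together with `V₁ ≥ inf V₁`
the Boltzmann weight satisfies `e^{-V(x)} ≤ e^{-V_min - inf V₁} e^{-c ‖x‖^p}`. On `{‖x‖ ≥ t}` one
half `e^{-c ‖x‖^p / 2}` of the Gaussian-type factor is at most `e^{-c t^p / 2}` and the other half is
integrable, so the unnormalised tail mass is `O(e^{-c t^p / 2})`; divide by the partition function. -/

open MeasureTheory Real

lemma rpow_norm_le_card_rpow_mul_sum_abs_rpow {ι : Type*} [Fintype ι] {p : ℝ} (hp : 0 < p)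
    (x : EuclideanSpace ℝ ι) :
    ‖x‖ ^ p ≤ (Fintype.card ι : ℝ) ^ (p / 2) * ∑ i, |x i| ^ p := by
  set S := ∑ i, |x i| ^ p
  have hS : 0 ≤ S := by positivity
  have hcoord : ∀ i, |x i| ^ (2 : ℝ) ≤ S ^ (2 / p) := fun i => by
    calc |x i| ^ (2 : ℝ) = (|x i| ^ p) ^ (2 / p) := by
          rw [← rpow_mul (abs_nonneg _), mul_div_cancel₀ _ hp.ne']
      _ ≤ S ^ (2 / p) := by
          gcongr
          exact Finset.single_le_sum (f := fun i => |x i| ^ p) (fun _ _ => by positivity)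
            (Finset.mem_univ i)
  have hsq : ‖x‖ ^ (2 : ℝ) ≤ Fintype.card ι * S ^ (2 / p) := by
    calc ‖x‖ ^ (2 : ℝ) = ∑ i, |x i| ^ (2 : ℝ) := by
          simp only [rpow_two, EuclideanSpace.norm_sq_eq, Real.norm_eq_abs]
      _ ≤ ∑ _i : ι, S ^ (2 / p) := Finset.sum_le_sum fun i _ => hcoord i
      _ = Fintype.card ι * S ^ (2 / p) := by simp
  calc ‖x‖ ^ p = (‖x‖ ^ (2 : ℝ)) ^ (p / 2) := by
        rw [← rpow_mul (norm_nonneg x), mul_div_cancel₀ _ two_ne_zero]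
    _ ≤ (Fintype.card ι * S ^ (2 / p)) ^ (p / 2) := by gcongr
    _ = (Fintype.card ι : ℝ) ^ (p / 2) * S := by
        have hexp : 2 / p * (p / 2) = 1 := by field_simp
        rw [mul_rpow (by positivity) (by positivity), ← rpow_mul hS, hexp, rpow_one]

lemma integrable_exp_neg_mul_norm_rpow {E : Type*} [NormedAddCommGroup E] [NormedSpace ℝ E]
    [FiniteDimensional ℝ E] [MeasurableSpace E] [BorelSpace E] (μ : Measure E)
    [μ.IsAddHaarMeasure] {b p : ℝ} (hb : 0 < b) (hp : 0 < p) :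
    Integrable (fun x : E => exp (-b * ‖x‖ ^ p)) μ := by
  rcases subsingleton_or_nontrivial E with hE | hE
  · exact .of_subsingleton
  rw [integrable_fun_norm_addHaar μ (f := fun y => exp (-b * y ^ p))]
  refine (integrableOn_rpow_mul_exp_neg_mul_rpow (s := (Module.finrank ℝ E - 1 : ℕ))
    (neg_one_lt_zero.trans_le (Nat.cast_nonneg _)) hp hb).congr_fun (fun y _ => ?_)
    measurableSet_Ioi
  simp only [rpow_natCast, smul_eq_mul]

lemma setIntegral_norm_ge_le_of_le_exp_neg_mul_norm_rpow {E : Type*} [NormedAddCommGroup E]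
    [MeasurableSpace E] [OpensMeasurableSpace E] {ν : Measure E} {w : E → ℝ} {M c p t : ℝ}
    (hM : 0 ≤ M) (hc : 0 ≤ c) (hp : 0 ≤ p) (ht : 0 ≤ t) (hw0 : ∀ x, 0 ≤ w x)
    (hw : ∀ x, w x ≤ M * exp (-c * ‖x‖ ^ p))
    (hint : Integrable (fun x => exp (-(c / 2) * ‖x‖ ^ p)) ν) :
    ∫ x in {x | t ≤ ‖x‖}, w x ∂ν ≤
      M * (∫ x, exp (-(c / 2) * ‖x‖ ^ p) ∂ν) * exp (-(c / 2) * t ^ p) := by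
  have hsplit : ∀ x ∈ {x : E | t ≤ ‖x‖},
      w x ≤ M * exp (-(c / 2) * t ^ p) * exp (-(c / 2) * ‖x‖ ^ p) := fun x hx => by
    have htx : t ^ p ≤ ‖x‖ ^ p := rpow_le_rpow ht hx hp
    refine (hw x).trans ?_
    rw [mul_assoc, ← exp_add]
    gcongr
    nlinarith
  calc ∫ x in {x | t ≤ ‖x‖}, w x ∂ν
      ≤ ∫ x in {x | t ≤ ‖x‖}, M * exp (-(c / 2) * t ^ p) * exp (-(c / 2) * ‖x‖ ^ p) ∂ν :=
        -- no integrability of `w` is needed: a non-integrable `w` has integral `0`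
        integral_mono_of_nonneg (.of_forall hw0) (hint.integrableOn.const_mul _)
          (ae_restrict_of_forall_mem (measurableSet_le measurable_const measurable_norm) hsplit)
    _ ≤ M * exp (-(c / 2) * t ^ p) * ∫ x, exp (-(c / 2) * ‖x‖ ^ p) ∂ν := by
        rw [integral_const_mul]
        exact mul_le_mul_of_nonneg_left
          (setIntegral_le_integral hint (.of_forall fun _ => (exp_pos _).le)) (by positivity)
    _ = M * (∫ x, exp (-(c / 2) * ‖x‖ ^ p) ∂ν) * exp (-(c / 2) * t ^ p) := by ring

theorem stmt15_general {n : ℕ} (p Cp Vmin : ℝ) (hp : 1 ≤ p) (hCp : 0 < Cp)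
    (V0 V1 : EuclideanSpace ℝ (Fin n) → ℝ)
    (hlb : ∀ x : EuclideanSpace ℝ (Fin n), Vmin + Cp * ∑ i, |x i| ^ p ≤ V0 x)
    (hbb : BddBelow (Set.range V1))
    (μ : Measure (EuclideanSpace ℝ (Fin n)))
    (hμ : ∀ A : Set (EuclideanSpace ℝ (Fin n)), MeasurableSet A →
      (μ A).toReal =
        (∫ x in A, Real.exp (-(V0 x + V1 x))) / ∫ x, Real.exp (-(V0 x + V1 x))) :
    ∃ C0 κ : ℝ, 0 < κ ∧ ∀ t : ℝ, 0 ≤ t →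
      (μ {x | t ≤ ‖x‖}).toReal ≤ C0 * Real.exp (-κ * t ^ p) := by
  obtain ⟨b, hb⟩ := hbb
  have hp0 : 0 < p := by linarith
  set A := max 1 ((n : ℝ) ^ (p / 2))
  have hA : 0 < A := lt_max_of_lt_left one_pos
  set c := Cp / A
  have hV : ∀ x, Vmin + b + c * ‖x‖ ^ p ≤ V0 x + V1 x := fun x => by
    have hnorm : ‖x‖ ^ p ≤ A * ∑ i, |x i| ^ p :=
      calc ‖x‖ ^ p ≤ (n : ℝ) ^ (p / 2) * ∑ i, |x i| ^ p := by
            simpa using rpow_norm_le_card_rpow_mul_sum_abs_rpow hp0 x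
        _ ≤ A * ∑ i, |x i| ^ p := by gcongr; exact le_max_right _ _
    have hcoord : c * ‖x‖ ^ p ≤ Cp * ∑ i, |x i| ^ p :=
      calc c * ‖x‖ ^ p ≤ Cp / A * (A * ∑ i, |x i| ^ p) := by gcongr
        _ = Cp * ∑ i, |x i| ^ p := by field_simp
    linarith [hlb x, hb (Set.mem_range_self x)]
  have hweight : ∀ x, exp (-(V0 x + V1 x)) ≤ exp (-(Vmin + b)) * exp (-c * ‖x‖ ^ p) :=
    fun x => by rw [← exp_add]; exact exp_le_exp.2 (by linarith [hV x])
  set Z := ∫ x, exp (-(V0 x + V1 x))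
  set K := ∫ x : EuclideanSpace ℝ (Fin n), exp (-(c / 2) * ‖x‖ ^ p)
  refine ⟨exp (-(Vmin + b)) * K / Z, c / 2, by positivity, fun t ht => ?_⟩
  rw [hμ _ (measurableSet_le measurable_const measurable_norm), div_mul_eq_mul_div]
  exact div_le_div_of_nonneg_right
    (setIntegral_norm_ge_le_of_le_exp_neg_mul_norm_rpow (exp_pos _).le (by positivity) hp0.le ht
      (fun _ => (exp_pos _).le) hweight (integrable_exp_neg_mul_norm_rpow _ (by positivity) hp0))
    (integral_nonneg fun _ => (exp_pos _).le)

theorem stmt15 {n : ℕ} (p Cp Vmin : ℝ) (hp : 1 ≤ p) (hCp : 0 < Cp)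
    (V0 V1 : EuclideanSpace ℝ (Fin n) → ℝ)
    (hV0 : Measurable V0) (hV1 : Measurable V1)
    (hlb : ∀ x : EuclideanSpace ℝ (Fin n), Vmin + Cp * ∑ i, |x i| ^ p ≤ V0 x)
    (hba : BddAbove (Set.range V1)) (hbb : BddBelow (Set.range V1))
    (μ : Measure (EuclideanSpace ℝ (Fin n)))
    (hμ : ∀ A : Set (EuclideanSpace ℝ (Fin n)), MeasurableSet A →
      (μ A).toReal =
        (∫ x in A, Real.exp (-(V0 x + V1 x))) / ∫ x, Real.exp (-(V0 x + V1 x))) :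
    ∃ C0 κ : ℝ, 0 < κ ∧ ∀ t : ℝ, 0 ≤ t →
      (μ {x | t ≤ ‖x‖}).toReal ≤ C0 * Real.exp (-κ * t ^ p) :=
  stmt15_general p Cp Vmin hp hCp V0 V1 hlb hbb μ hμ
end
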